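/- Let L = ⟨a,b,c,d,x⟩ as above, and define b̃ = x⁻¹bx, c̃ = x⁻¹cx, d̃ = x⁻¹dx. Then b̃, c̃, d̃ are involutions satisfying the wreath recursions b̃ = (c̃, a), c̃ = (d̃, a), d̃ = (b̃, 1); consequently ⟨a, b̃, c̃, d̃⟩ is isomorphic to the Grigorchuk group G = ⟨a,b,c,d⟩. -/

import Mathlib

/-!
With functions composed right to left, `x = a * (1, x)`, and conjugation by any
`y = a * (p, q)` sends `(f, g)` to `(q g q⁻¹, p f p⁻¹)`. Conjugating `b = (a, c)`, `c = (a, d)`,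
`d = (1, b)` by `x` therefore gives `b̃ = (c̃, a)`, `c̃ = (d̃, a)`, `d̃ = (b̃, 1)`. The mirror `m`,
flipping every letter, is `a * (m, m)` and commutes with `a`, so conjugating `b, c, d` by `m`
gives a second solution of the same recursion. That recursion has only one solution (induct on
the length of a word), hence `m b m⁻¹ = b̃`, `m c m⁻¹ = c̃`, `m d m⁻¹ = d̃`, and conjugation by `m`
maps `⟨a, b, c, d⟩` isomorphically onto `⟨a, b̃, c̃, d̃⟩`.
-/

namespace GrigTree

/-- Vertices of the rooted binary tree: finite binary strings. -/
abbrev V := List Bool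

/-- The rooted automorphism `a`, swapping the two first-level subtrees. -/
def aFun : V → V
  | [] => []
  | i :: w => (!i) :: w

lemma aFun_invol : ∀ w, aFun (aFun w) = w
  | [] => rfl
  | _ :: _ => by simp [aFun]

/-- The automorphism `a` as a permutation. -/
def a : Equiv.Perm V := ⟨aFun, aFun, aFun_invol, aFun_invol⟩

/-- The adding machine `x = (1, x)a`. -/
def xFun : V → V
  | [] => []
  | false :: w => true :: w
  | true :: w => false :: xFun w

def xInvFun : V → V
  | [] => []
  | true :: w => false :: w
  | false :: w => true :: xInvFun w

lemma x_left_inv : ∀ w, xInvFun (xFun w) = w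
  | [] => rfl
  | false :: _ => rfl
  | true :: w => by simp [xFun, xInvFun, x_left_inv w]

lemma x_right_inv : ∀ w, xFun (xInvFun w) = w
  | [] => rfl
  | true :: _ => rfl
  | false :: w => by simp [xFun, xInvFun, x_right_inv w]

/-- The adding machine as a permutation of the tree. -/
def x : Equiv.Perm V := ⟨xFun, xInvFun, x_left_inv, x_right_inv⟩

/-- States of the Grigorchuk automaton (the nontrivial ones). -/
inductive St | b | c | d
  deriving DecidableEq

def nextSt : St → St
  | .b => .c
  | .c => .d
  | .d => .b

def usesA : St → Bool
  | .b => true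
  | .c => true
  | .d => false

/-- The action of the Grigorchuk generators `b = (a,c)`, `c = (a,d)`, `d = (1,b)`. -/
def gFun : St → V → V
  | _, [] => []
  | s, false :: w => false :: (if usesA s then aFun w else w)
  | s, true :: w => true :: gFun (nextSt s) w

lemma gFun_invol : ∀ (w : V) (s : St), gFun s (gFun s w) = w
  | [], _ => rfl
  | false :: w, s => by cases h : usesA s <;> simp [gFun, h, aFun_invol]
  | true :: w, s => by simp [gFun, gFun_invol w]

def gPerm (s : St) : Equiv.Perm V :=
  ⟨gFun s, gFun s, fun w => gFun_invol w s, fun w => gFun_invol w s⟩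

/-- The Grigorchuk generator `b = (a, c)`. -/
def b : Equiv.Perm V := gPerm .b
/-- The Grigorchuk generator `c = (a, d)`. -/
def c : Equiv.Perm V := gPerm .c
/-- The Grigorchuk generator `d = (1, b)`. -/
def d : Equiv.Perm V := gPerm .d

def pairFun (f g : V → V) : V → V
  | [] => []
  | false :: w => false :: f w
  | true :: w => true :: g w

/-- The automorphism `(f, g)` acting as `f` on the left subtree and as `g` on the
right subtree, fixing the first level. -/
def pair (f g : Equiv.Perm V) : Equiv.Perm V where
  toFun := pairFun f g
  invFun := pairFun f.symm g.symm
  left_inv := by rintro (_ | ⟨i, w⟩) <;> first | rfl | cases i <;> simp [pairFun]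
  right_inv := by rintro (_ | ⟨i, w⟩) <;> first | rfl | cases i <;> simp [pairFun]

/-- The commutator `[u, v] = u⁻¹v⁻¹uv` of the paper.  Words of tree automorphisms in the
paper are composed left-to-right, so the paper's word `u⁻¹v⁻¹uv` corresponds to the
permutation `v * u * v⁻¹ * u⁻¹` under the usual (right-to-left) composition of functions. -/
def pcomm (u v : Equiv.Perm V) : Equiv.Perm V := v * u * v⁻¹ * u⁻¹

/-- The conjugate `v⁻¹ u v` of the paper (left-to-right composition). -/
def pconj (u v : Equiv.Perm V) : Equiv.Perm V := v * u * v⁻¹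


/-- `b̃ = x⁻¹ b x` (the paper's conjugate, composed left-to-right). -/
def btil : Equiv.Perm V := pconj b x
/-- `c̃ = x⁻¹ c x`. -/
def ctil : Equiv.Perm V := pconj c x
/-- `d̃ = x⁻¹ d x`. -/
def dtil : Equiv.Perm V := pconj d x

@[simp] lemma pair_apply_nil (f g : Equiv.Perm V) : pair f g [] = [] := rfl

@[simp] lemma pair_apply_false (f g : Equiv.Perm V) (w : V) :
    pair f g (false :: w) = false :: f w := rfl

@[simp] lemma pair_apply_true (f g : Equiv.Perm V) (w : V) :
    pair f g (true :: w) = true :: g w := rfl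

lemma pair_mul_pair (f g f' g' : Equiv.Perm V) :
    pair f g * pair f' g' = pair (f * f') (g * g') :=
  Equiv.ext fun w => by rcases w with _ | ⟨_ | _, u⟩ <;> rfl

lemma pair_one : pair 1 1 = 1 :=
  Equiv.ext fun w => by rcases w with _ | ⟨_ | _, u⟩ <;> rfl

lemma pair_inv (f g : Equiv.Perm V) : (pair f g)⁻¹ = pair f⁻¹ g⁻¹ :=
  inv_eq_of_mul_eq_one_right <| by rw [pair_mul_pair, mul_inv_cancel, mul_inv_cancel, pair_one]

lemma a_mul_pair (f g : Equiv.Perm V) : a * pair f g = pair g f * a :=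
  Equiv.ext fun w => by rcases w with _ | ⟨_ | _, u⟩ <;> rfl

lemma a_mul_a : a * a = 1 :=
  Equiv.ext aFun_invol

lemma x_eq_a_mul_pair : x = a * pair 1 x :=
  Equiv.ext fun w => by rcases w with _ | ⟨_ | _, u⟩ <;> rfl

lemma b_eq_pair : b = pair a c :=
  Equiv.ext fun w => by rcases w with _ | ⟨_ | _, u⟩ <;> rfl

lemma c_eq_pair : c = pair a d :=
  Equiv.ext fun w => by rcases w with _ | ⟨_ | _, u⟩ <;> rfl

lemma d_eq_pair : d = pair 1 b :=
  Equiv.ext fun w => by rcases w with _ | ⟨_ | _, u⟩ <;> rfl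

lemma conj_pair_of_eq_a_mul_pair {y p q : Equiv.Perm V} (hy : y = a * pair p q)
    (f g : Equiv.Perm V) :
    MulAut.conj y (pair f g) = pair (MulAut.conj q g) (MulAut.conj p f) := by
  have hainv : a⁻¹ = a := inv_eq_of_mul_eq_one_right a_mul_a
  calc MulAut.conj y (pair f g)
      = a * pair (p * f * p⁻¹) (q * g * q⁻¹) * a := by
        rw [MulAut.conj_apply, hy, mul_inv_rev, pair_inv, hainv, mul_assoc a, pair_mul_pair,
          ← mul_assoc, mul_assoc a, pair_mul_pair]
    _ = pair (MulAut.conj q g) (MulAut.conj p f) := by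
        rw [a_mul_pair, mul_assoc, a_mul_a, mul_one, MulAut.conj_apply, MulAut.conj_apply]

/-- The recursion of `(b, c, d)` with the two sections of every generator exchanged. -/
def MirrorRecursion (f g h : Equiv.Perm V) : Prop :=
  f = pair g a ∧ g = pair h a ∧ h = pair f 1

lemma MirrorRecursion.unique {f g h f' g' h' : Equiv.Perm V} (hs : MirrorRecursion f g h)
    (hs' : MirrorRecursion f' g' h') : f = f' ∧ g = g' ∧ h = h' := by
  obtain ⟨hf, hg, hh⟩ := hs
  obtain ⟨hf', hg', hh'⟩ := hs'
  simp only [Equiv.ext_iff] at hf hg hh hf' hg' hh'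
  suffices agree : ∀ w, f w = f' w ∧ g w = g' w ∧ h w = h' w from
    ⟨Equiv.ext fun w => (agree w).1, Equiv.ext fun w => (agree w).2.1,
      Equiv.ext fun w => (agree w).2.2⟩
  intro w
  induction w with
  | nil => simp only [hf, hg, hh, hf', hg', hh', pair_apply_nil, and_self]
  | cons i u ih =>
    obtain ⟨ihf, ihg, ihh⟩ := ih
    rw [hf, hg, hh, hf', hg', hh']
    cases i
    · simp only [pair_apply_false, ihf, ihg, ihh, and_self]
    · simp only [pair_apply_true, and_self]

lemma pconj_eq_conj (u v : Equiv.Perm V) : pconj u v = MulAut.conj v u := rfl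

lemma mirrorRecursion_tilde : MirrorRecursion btil ctil dtil := by
  have conj_x := conj_pair_of_eq_a_mul_pair x_eq_a_mul_pair
  simp only [MirrorRecursion, btil, ctil, dtil, pconj_eq_conj]
  refine ⟨?_, ?_, ?_⟩
  · rw [b_eq_pair, conj_x, map_one, MulAut.one_apply]
  · rw [c_eq_pair, conj_x, map_one, MulAut.one_apply]
  · rw [d_eq_pair, conj_x, map_one]

def mirror : Equiv.Perm V :=
  (List.map_involutive_iff.2 Bool.involutive_not).toPerm

lemma mirror_eq_a_mul_pair : mirror = a * pair mirror mirror :=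
  Equiv.ext fun w => by rcases w with _ | ⟨_ | _, u⟩ <;> rfl

lemma conj_mirror_a : MulAut.conj mirror a = a := by
  rw [MulAut.conj_apply, mul_inv_eq_iff_eq_mul]
  exact Equiv.ext fun w => by rcases w with _ | ⟨_ | _, u⟩ <;> rfl

lemma mirrorRecursion_conj_mirror :
    MirrorRecursion (MulAut.conj mirror b) (MulAut.conj mirror c) (MulAut.conj mirror d) := by
  have conj_mirror := conj_pair_of_eq_a_mul_pair mirror_eq_a_mul_pair
  refine ⟨?_, ?_, ?_⟩
  · rw [b_eq_pair, conj_mirror, conj_mirror_a]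
  · rw [c_eq_pair, conj_mirror, conj_mirror_a]
  · rw [d_eq_pair, conj_mirror, map_one]

lemma gPerm_sq (s : St) : gPerm s ^ 2 = 1 :=
  Equiv.ext fun w => gFun_invol w s

lemma pconj_sq_of_sq {u : Equiv.Perm V} (hu : u ^ 2 = 1) (v : Equiv.Perm V) :
    pconj u v ^ 2 = 1 := by
  rw [pconj_eq_conj, ← map_pow, hu, map_one]

lemma closure_tilde_eq_map_conj_mirror :
    Subgroup.closure {a, btil, ctil, dtil} =
      (Subgroup.closure {a, b, c, d}).map (MulAut.conj mirror).toMonoidHom := by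
  obtain ⟨hb, hc, hd⟩ := mirrorRecursion_conj_mirror.unique mirrorRecursion_tilde
  rw [MonoidHom.map_closure]
  simp only [MulEquiv.coe_toMonoidHom, Set.image_insert_eq, Set.image_singleton,
    conj_mirror_a, hb, hc, hd]

/-- `b̃, c̃, d̃` are involutions satisfying the wreath recursions `b̃ = (c̃, a)`,
`c̃ = (d̃, a)`, `d̃ = (b̃, 1)`; consequently `⟨a, b̃, c̃, d̃⟩` is isomorphic to the
Grigorchuk group `G = ⟨a, b, c, d⟩`. -/
theorem conjugated_generators_give_grigorchuk :
    btil ^ 2 = 1 ∧ ctil ^ 2 = 1 ∧ dtil ^ 2 = 1 ∧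
      btil = pair ctil a ∧ ctil = pair dtil a ∧ dtil = pair btil 1 ∧
      Nonempty
        ((Subgroup.closure {a, btil, ctil, dtil} : Subgroup (Equiv.Perm V)) ≃*
          (Subgroup.closure {a, b, c, d} : Subgroup (Equiv.Perm V))) := by
  obtain ⟨hb, hc, hd⟩ := mirrorRecursion_tilde
  refine ⟨pconj_sq_of_sq (gPerm_sq .b) x, pconj_sq_of_sq (gPerm_sq .c) x,
    pconj_sq_of_sq (gPerm_sq .d) x, hb, hc, hd, ⟨?_⟩⟩
  exact (MulEquiv.subgroupCongr closure_tilde_eq_map_conj_mirror).trans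
    (MulEquiv.subgroupMap (MulAut.conj mirror) _).symm

end GrigTree
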